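/- Let p_w ∈ A^M be a configuration with pairwise distances at least 2(r_max + ε), and let W_{p_w} be its Voronoi tessellation. If a configuration p satisfies p_i ∈ W_{p_w,i} ⊖ B_{r_max+ε} for all i (where ⊖ denotes Pontryagin/erosion by the closed ball of radius r_max+ε), then for each i, p_i ∈ W_{p,i} ⊖ B_{r_max+ε}, where W_p is the Voronoi tessellation of p. -/

import Mathlib

/-!
If `p i` and `p j` sit at depth `ρ` inside the cells of two distinct seeds `pw i ≠ pw j`, the two
balls `p i + B_ρ` and `p j + B_ρ` lie on opposite sides of the bisector of `pw i` and `pw j`.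
Testing this with the points `p i + ρ e` and `p j - ρ e`, where `e` is the unit vector from
`pw i` towards `pw j`, shows that `p j - p i` has component at least `2ρ` along `e`, so
`‖p i - p j‖ ≥ 2ρ`. Then every point of `p i + B_ρ` is at distance at most `ρ` from `p i` and at
least `ρ` from every other `p j`, hence `p i + B_ρ` lies in the new cell of `p i`.
-/

open scoped InnerProductSpace

noncomputable section

/-- The Voronoi cell of seed `p i` within the region `A`. -/
def voronoiCell {D M : ℕ} (A : Set (EuclideanSpace ℝ (Fin D)))
    (p : Fin M → EuclideanSpace ℝ (Fin D)) (i : Fin M) : Set (EuclideanSpace ℝ (Fin D)) :=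
  {q ∈ A | ∀ j, j ≠ i → ‖q - p i‖ ≤ ‖q - p j‖}

/-- Pontryagin erosion of a set by the closed ball of radius `ρ`. -/
def erode {E : Type*} [NormedAddCommGroup E] (V : Set E) (ρ : ℝ) : Set E :=
  {x | ∀ y : E, ‖y‖ ≤ ρ → x + y ∈ V}

section Bisector

variable {F : Type*} [NormedAddCommGroup F] [InnerProductSpace ℝ F]

theorem two_mul_inner_le_of_norm_sub_le {z a b : F} (h : ‖z - a‖ ≤ ‖z - b‖) :
    2 * ⟪z, b - a⟫_ℝ ≤ ‖b‖ ^ 2 - ‖a‖ ^ 2 := by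
  have hsq : ‖z - a‖ ^ 2 ≤ ‖z - b‖ ^ 2 := pow_le_pow_left₀ (norm_nonneg _) h 2
  rw [norm_sub_sq_real, norm_sub_sq_real] at hsq
  rw [inner_sub_right]
  linarith

theorem inner_sub_nonneg_of_opposite_sides_of_bisector {z z' a b : F}
    (hz : ‖z - a‖ ≤ ‖z - b‖) (hz' : ‖z' - b‖ ≤ ‖z' - a‖) :
    0 ≤ ⟪z' - z, b - a⟫_ℝ := by
  have h := two_mul_inner_le_of_norm_sub_le hz
  have h' := two_mul_inner_le_of_norm_sub_le hz'
  rw [← neg_sub b a, inner_neg_right] at h'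
  rw [inner_sub_left]
  linarith

theorem two_mul_le_norm_sub_of_balls_on_opposite_sides_of_bisector {x y a b : F} {ρ : ℝ}
    (hab : a ≠ b) (hρ : 0 ≤ ρ)
    (hx : ∀ v : F, ‖v‖ ≤ ρ → ‖x + v - a‖ ≤ ‖x + v - b‖)
    (hy : ∀ v : F, ‖v‖ ≤ ρ → ‖y + v - b‖ ≤ ‖y + v - a‖) :
    2 * ρ ≤ ‖x - y‖ := by
  set u := b - a
  have hu : 0 < ‖u‖ := norm_pos_iff.2 (sub_ne_zero.2 hab.symm)
  set e := (ρ / ‖u‖) • u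
  have he : ‖e‖ = ρ := by
    rw [norm_smul, Real.norm_of_nonneg (by positivity), div_mul_cancel₀ _ hu.ne']
  have he_inner : ⟪e, u⟫_ℝ = ρ * ‖u‖ := by
    rw [real_inner_smul_left, real_inner_self_eq_norm_sq]
    field_simp
  have hsep := inner_sub_nonneg_of_opposite_sides_of_bisector
    (hx e he.le) (hy (-e) (by rw [norm_neg, he]))
  have hcomp : 2 * ρ * ‖u‖ ≤ ⟪y - x, u⟫_ℝ := by
    rw [show y + -e - (x + e) = (y - x) - (2 : ℝ) • e by module,
      inner_sub_left, real_inner_smul_left, he_inner] at hsep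
    linarith
  have hcs : 2 * ρ * ‖u‖ ≤ ‖y - x‖ * ‖u‖ := hcomp.trans (real_inner_le_norm _ _)
  rw [norm_sub_rev]
  exact le_of_mul_le_mul_right hcs hu

end Bisector

section Erosion

theorem erode_mono {E : Type*} [NormedAddCommGroup E] {V W : Set E} (hVW : V ⊆ W) (ρ : ℝ) :
    erode V ρ ⊆ erode W ρ :=
  fun _ hx y hy => hVW (hx y hy)

theorem voronoiCell_subset {D M : ℕ} (A : Set (EuclideanSpace ℝ (Fin D)))
    (p : Fin M → EuclideanSpace ℝ (Fin D)) (i : Fin M) : voronoiCell A p i ⊆ A :=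
  fun _ hq => hq.1

variable {D M : ℕ} {A : Set (EuclideanSpace ℝ (Fin D))} {p : Fin M → EuclideanSpace ℝ (Fin D)}
  {ρ : ℝ}

theorem two_mul_le_norm_sub_of_mem_erode_voronoiCell {pw : Fin M → EuclideanSpace ℝ (Fin D)}
    {i j : Fin M} (hij : i ≠ j) (hpw : pw i ≠ pw j) (hρ : 0 ≤ ρ)
    (hi : p i ∈ erode (voronoiCell A pw i) ρ) (hj : p j ∈ erode (voronoiCell A pw j) ρ) :
    2 * ρ ≤ ‖p i - p j‖ :=
  two_mul_le_norm_sub_of_balls_on_opposite_sides_of_bisector hpw hρ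
    (fun v hv => (hi v hv).2 j hij.symm) (fun v hv => (hj v hv).2 i hij)

theorem mem_erode_voronoiCell_of_two_mul_le_norm_sub {i : Fin M} (hA : p i ∈ erode A ρ)
    (hsep : ∀ j, j ≠ i → 2 * ρ ≤ ‖p i - p j‖) :
    p i ∈ erode (voronoiCell A p i) ρ := by
  intro y hy
  refine ⟨hA y hy, fun j hj => ?_⟩
  have htri : ‖p i - p j‖ ≤ ‖p i + y - p j‖ + ‖y‖ :=
    calc ‖p i - p j‖ = ‖p i + y - p j - y‖ := by rw [add_sub_right_comm, add_sub_cancel_right]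
      _ ≤ ‖p i + y - p j‖ + ‖y‖ := norm_sub_le _ _
  rw [add_sub_cancel_left]
  linarith [hsep j hj]

end Erosion

theorem eroded_voronoi_membership_preserved_general (D M : ℕ)
    (A : Set (EuclideanSpace ℝ (Fin D)))
    (rmax ε : ℝ) (hr : 0 < rmax) (hε : 0 < ε)
    (pw p : Fin M → EuclideanSpace ℝ (Fin D))
    (hsep : ∀ i j, i ≠ j → 2 * (rmax + ε) ≤ ‖pw i - pw j‖)
    (hmem : ∀ i, p i ∈ erode (voronoiCell A pw i) (rmax + ε)) :
    ∀ i, p i ∈ erode (voronoiCell A p i) (rmax + ε) := by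
  have hρ : 0 < rmax + ε := add_pos hr hε
  intro i
  refine mem_erode_voronoiCell_of_two_mul_le_norm_sub
    (erode_mono (voronoiCell_subset A pw i) _ (hmem i)) fun j hji => ?_
  have hpw : pw i ≠ pw j := fun h => by
    have := hsep i j hji.symm
    rw [h, sub_self, norm_zero] at this
    linarith
  exact two_mul_le_norm_sub_of_mem_erode_voronoiCell hji.symm hpw hρ.le (hmem i) (hmem j)

/-- Lemma 1: if `p_w` has pairwise distances at least `2 (r_max + ε)` and each `p i`
lies in the erosion of the Voronoi cell `W_{p_w, i}` by the ball of radius `r_max + ε`,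
then each `p i` lies in the erosion of its own Voronoi cell `W_{p, i}` by the same ball. -/
theorem eroded_voronoi_membership_preserved (D M : ℕ)
    (A : Set (EuclideanSpace ℝ (Fin D))) (hAconv : Convex ℝ A) (hAcomp : IsCompact A)
    (rmax ε : ℝ) (hr : 0 < rmax) (hε : 0 < ε)
    (pw p : Fin M → EuclideanSpace ℝ (Fin D))
    (hsep : ∀ i j, i ≠ j → 2 * (rmax + ε) ≤ ‖pw i - pw j‖)
    (hmem : ∀ i, p i ∈ erode (voronoiCell A pw i) (rmax + ε)) :
    ∀ i, p i ∈ erode (voronoiCell A p i) (rmax + ε) :=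
  eroded_voronoi_membership_preserved_general D M A rmax ε hr hε pw p hsep hmem
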